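/- Every group G embeds into Bin(G): the map φ^reg : G → Bin(G) sending g to the operation *_g defined by a *_g b = a b⁻¹ g b is an injective monoid homomorphism from G into the monoid Bin(G) whose image is a distributive set consisting of invertible operations. -/

import Mathlib

universe u

/-- `BinOp X` is the set of all binary operations on `X`. -/
def BinOp (X : Type u) : Type u := X → X → X

namespace BinOp

variable {X : Type u}

/-- `Bin(X)` is a monoid with composition `a (*₁*₂) b = (a *₁ b) *₂ b` and
identity the right-trivial operation `a *₀ b = a`. -/
instance instMonoid : Monoid (BinOp X) where
  mul f g := fun a b => g (f a b) b
  one := fun a _ => a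
  mul_assoc _ _ _ := rfl
  one_mul _ := rfl
  mul_one _ := rfl

/-- The pair `(f, g)` is right distributive: `(a * b) *' c = (a *' c) * (b *' c)`. -/
def RightDistrib (f g : BinOp X) : Prop :=
  ∀ a b c : X, g (f a b) c = f (g a c) (g b c)

/-- A set of binary operations is distributive if every pair of its elements
(possibly equal) is right distributive. -/
def DistribSet (S : Set (BinOp X)) : Prop :=
  ∀ f ∈ S, ∀ g ∈ S, RightDistrib f g

end BinOp

/-- The regular embedding operation: `a *_g b = a b⁻¹ g b`. -/
def regularOp {G : Type u} [Group G] (g : G) : BinOp G := fun a b => a * b⁻¹ * g * b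

/-! The identity `a b⁻¹ (g₁ g₂) b = (a b⁻¹ g₁ b) b⁻¹ g₂ b` makes `g ↦ *_g` a monoid homomorphism
`G →* Bin(G)`, so its image consists of units because every element of `G` is one. Evaluating
`*_g` at `(1, 1)` recovers `g`. -/

namespace BinOp

variable {G : Type u} [Group G]

theorem regularOp_apply_one_one (g : G) : regularOp g 1 1 = g := by
  simp [regularOp]

theorem regularOp_injective : Function.Injective (regularOp (G := G)) := fun g₁ g₂ h => by
  rw [← regularOp_apply_one_one g₁, h, regularOp_apply_one_one]

theorem regularOp_one : regularOp (1 : G) = (1 : BinOp G) := by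
  funext a b
  show a * b⁻¹ * 1 * b = a
  group

theorem regularOp_mul (g₁ g₂ : G) : regularOp (g₁ * g₂) = regularOp g₁ * regularOp g₂ := by
  funext a b
  show a * b⁻¹ * (g₁ * g₂) * b = a * b⁻¹ * g₁ * b * b⁻¹ * g₂ * b
  group

def regularHom : G →* BinOp G where
  toFun := regularOp
  map_one' := regularOp_one
  map_mul' := regularOp_mul

theorem rightDistrib_regularOp (g₁ g₂ : G) : RightDistrib (regularOp g₁) (regularOp g₂) := by
  intro a b c
  show a * b⁻¹ * g₁ * b * c⁻¹ * g₂ * c =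
    a * c⁻¹ * g₂ * c * (b * c⁻¹ * g₂ * c)⁻¹ * g₁ * (b * c⁻¹ * g₂ * c)
  group

theorem distribSet_range_regularOp : DistribSet (Set.range (regularOp (G := G))) := by
  rintro _ ⟨g₁, rfl⟩ _ ⟨g₂, rfl⟩
  exact rightDistrib_regularOp g₁ g₂

theorem isUnit_regularOp (g : G) : IsUnit (regularOp g) :=
  (Group.isUnit g).map regularHom

end BinOp

open BinOp in
/-- Regular embedding: every group `G` embeds in `Bin(G)` via `g ↦ *_g` with
`a *_g b = a b⁻¹ g b`; this is an injective monoid homomorphism whose image is a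
distributive set of invertible operations. -/
theorem regular_embedding (G : Type u) [Group G] :
    Function.Injective (regularOp (G := G)) ∧
    regularOp (1 : G) = (1 : BinOp G) ∧
    (∀ g₁ g₂ : G, regularOp (g₁ * g₂) = regularOp g₁ * regularOp g₂) ∧
    DistribSet (Set.range (regularOp (G := G))) ∧
    (∀ g : G, IsUnit (regularOp g)) :=
  ⟨regularOp_injective, regularOp_one, regularOp_mul, distribSet_range_regularOp,
    isUnit_regularOp⟩
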